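/- For any two pairs of linear-cycle parameters (a,b) and (ǎ,b̌), the complex dimension of L_{a,b} ∩ L_{ǎ,b̌} equals the number of new bicycles attached to ((a,b),(ǎ,b̌)); equivalently, the intersection of the two projective linear subspaces ℙ(L_{a,b}) ∩ ℙ(L_{ǎ,b̌}) ⊆ ℙ^{n+1} is a projective space of dimension (number of new bicycles) − 1. -/

import Mathlib

open Finset Matrix

/-- `ζ_{2d} = exp(2πi/(2d))`. -/
noncomputable def zeta2d (d : ℕ) : ℂ :=
  Complex.exp (2 * Real.pi * Complex.I / (2 * (d : ℂ)))

/-- The even-position index `2e` in `{0,…,n+1}` (with `n = 2h`). -/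
def evIdx (h : ℕ) (e : Fin (h + 1)) : Fin (2 * h + 2) :=
  ⟨2 * e.1, by have := e.isLt; omega⟩

/-- The odd-position index `2e+1` in `{0,…,n+1}` (with `n = 2h`). -/
def odIdx (h : ℕ) (e : Fin (h + 1)) : Fin (2 * h + 2) :=
  ⟨2 * e.1 + 1, by have := e.isLt; omega⟩

/-- The index set `I_N`: tuples `(i_0,…,i_{n+1})` with `0 ≤ i_e ≤ d-2` and `∑ i_e = N`,
for `n = 2h` even. -/
abbrev IdxSet (h d N : ℕ) : Type :=
  {i : Fin (2 * h + 2) → Fin (d - 1) // ∑ e, (i e).1 = N}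

/-- The period vector `p^{a,b}` of the linear cycle `ℙ^{n/2}_{a,b}` in the Fermat variety,
extended by zero to all integer tuples. -/
noncomputable def pvec (h d : ℕ) (a : Fin (h + 1) → ℕ) (b : Equiv.Perm (Fin (2 * h + 2)))
    (i : Fin (2 * h + 2) → ℕ) : ℂ :=
  if ∀ e : Fin (h + 1), i (b (evIdx h e)) + i (b (odIdx h e)) = d - 2 then
    zeta2d d ^ (∑ e : Fin (h + 1), (i (b (evIdx h e)) + 1) * (1 + 2 * a e))
  else 0

/-- The period matrix `[p_{i+j}]` with rows indexed by `I_{(n/2)d-n-2}` and columns by `I_d`. -/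
noncomputable def pmat (h d : ℕ) (p : (Fin (2 * h + 2) → ℕ) → ℂ) :
    Matrix (IdxSet h d (h * d - (2 * h + 2))) (IdxSet h d d) ℂ :=
  Matrix.of fun i j => p fun e => (i.1 e).1 + (j.1 e).1

/-- The period vector `P` of the linear cycle with `a = (0,…,0)` and `b = id`. -/
noncomputable def Pvec (h d : ℕ) : (Fin (2 * h + 2) → ℕ) → ℂ :=
  pvec h d (fun _ => 0) (Equiv.refl _)

/-- The period vector `P̌_m` (with `μ = m+1`): `a` has first `μ` entries `0`, the rest `1`,
and `b = id`. -/
noncomputable def PcheckVec (h d μ : ℕ) : (Fin (2 * h + 2) → ℕ) → ℂ :=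
  pvec h d (fun e => if e.1 < μ then 0 else 1) (Equiv.refl _)

/-- The combinatorial constant `C_{α_1,…,α_s}`. -/
def Ccoef (n d : ℕ) {s : ℕ} (α : Fin s → ℕ) : ℤ :=
  ((n + 1 + d).choose (n + 1) : ℤ) -
    ∑ k ∈ Finset.Icc 1 s, (-1 : ℤ) ^ (k - 1) *
      ∑ T ∈ Finset.univ.filter (fun T : Finset (Fin s) => T.card = k ∧ ∑ i ∈ T, α i ≤ d),
        (((n + 1 + d - ∑ i ∈ T, α i).choose (n + 1) : ℤ))

/-- The sequence `x^s, y^t` (x repeated s times followed by y repeated t times). -/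
def twoBlock (x y s t : ℕ) : Fin (s + t) → ℕ := fun i => if i.1 < s then x else y

/-- `K^d_n(m) = 2·C_{1^{n/2+1},(d-1)^{n/2+1}} − C_{1^{n−m+1},(d−1)^{m+1}}`, with `n = 2h`,
`μ = m+1`. -/
def Kdef (h d μ : ℕ) : ℤ :=
  2 * Ccoef (2 * h) d (twoBlock 1 (d - 1) (h + 1) (h + 1)) -
    Ccoef (2 * h) d (twoBlock 1 (d - 1) (2 * h + 2 - μ) μ)

/-- The linear subspace `L_{a,b} ⊆ ℂ^{n+2}` cut out by the equations
`x_{b_{2e}} − ζ_{2d}^{1+2a_{2e+1}}·x_{b_{2e+1}} = 0` for `e = 0,…,n/2`. -/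
noncomputable def Lsub (h d : ℕ) (a : Fin (h + 1) → ℕ) (b : Equiv.Perm (Fin (2 * h + 2))) :
    Submodule ℂ (Fin (2 * h + 2) → ℂ) :=
  ⨅ e : Fin (h + 1), LinearMap.ker
    ((LinearMap.proj (R := ℂ) (φ := fun _ : Fin (2 * h + 2) => ℂ) (b (evIdx h e)))
      - zeta2d d ^ (1 + 2 * a e) •
        (LinearMap.proj (R := ℂ) (φ := fun _ : Fin (2 * h + 2) => ℂ) (b (odIdx h e))))

/-- Cyclic successor on `Fin (2s+2)`. -/
def cyc (s : ℕ) (t : Fin (2 * s + 2)) : Fin (2 * s + 2) :=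
  ⟨(t.1 + 1) % (2 * s + 2), Nat.mod_lt _ (by omega)⟩

/-- `c : Fin (2s+2) → {0,…,n+1}` is a bicycle attached to `(b, b̌)`: its entries are
pairwise distinct, at odd steps (0-indexed even `t`) consecutive entries form a `b`-pair
`{b_{2k}, b_{2k+1}}`, and at even steps (0-indexed odd `t`) a `b̌`-pair. -/
def IsBicycle (h : ℕ) (b bc : Equiv.Perm (Fin (2 * h + 2))) {s : ℕ}
    (c : Fin (2 * s + 2) → Fin (2 * h + 2)) : Prop :=
  Function.Injective c ∧
  ∀ t : Fin (2 * s + 2),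
    if t.1 % 2 = 0 then
      ∃ k : Fin (h + 1),
        ({c t, c (cyc s t)} : Set (Fin (2 * h + 2))) = {b (evIdx h k), b (odIdx h k)}
    else
      ∃ k : Fin (h + 1),
        ({c t, c (cyc s t)} : Set (Fin (2 * h + 2))) = {bc (evIdx h k), bc (odIdx h k)}

/-- The signed contribution of the ordered edge `(u,v)` with respect to `(a,b)`:
`+(1+2a_{2k+1})` if `(u,v) = (b_{2k}, b_{2k+1})`, `−(1+2a_{2k+1})` if
`(u,v) = (b_{2k+1}, b_{2k})`, and `0` otherwise. -/
def stepSign (h : ℕ) (a : Fin (h + 1) → ℕ) (b : Equiv.Perm (Fin (2 * h + 2)))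
    (u v : Fin (2 * h + 2)) : ℤ :=
  ∑ k : Fin (h + 1),
    (if u = b (evIdx h k) ∧ v = b (odIdx h k) then ((1 : ℤ) + 2 * (a k : ℤ))
     else if u = b (odIdx h k) ∧ v = b (evIdx h k) then -((1 : ℤ) + 2 * (a k : ℤ))
     else 0)

/-- The bicConductor of a bicycle `c` with respect to `((a,b), (ǎ,b̌))`. -/
def bicConductor (h : ℕ) (a ac : Fin (h + 1) → ℕ) (b bc : Equiv.Perm (Fin (2 * h + 2)))
    {s : ℕ} (c : Fin (2 * s + 2) → Fin (2 * h + 2)) : ℤ :=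
  ∑ t : Fin (2 * s + 2),
    if t.1 % 2 = 0 then stepSign h a b (c t) (c (cyc s t))
    else stepSign h ac bc (c t) (c (cyc s t))

/-!
The equations of `L_{a,b}` pair up the coordinates along the perfect matching
`{b_{2e}, b_{2e+1}}`, each equation reading `x_v = ζ^{±(1+2a)} x_{v'}`; those of `L_{ǎ,b̌}` do the
same along a second perfect matching. Two perfect matchings split the coordinates into disjoint
even cycles, the bicycles, which are the orbits of the (dihedral) group generated by the two
matching involutions, and the combined system decouples along them. On one bicycle a solution is
either zero or nowhere zero, and going once around it multiplies a nonzero solution by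
`ζ^{conductor}`. So a bicycle carries a line of solutions if `ζ_{2d}^{conductor} = 1`, that is if
`2d` divides the conductor, and no nonzero solution otherwise.
-/

open Function MulAction Module

theorem finrank_eq_ncard_supporting_orbits {G V K : Type*} [Group G] [MulAction G V] [Finite V]
    [Field K] (S : Submodule K (V → K))
    (hsupp : ∀ x ∈ S, ∀ (g : G) v, x v ≠ 0 → x (g • v) ≠ 0)
    (hres : ∀ x ∈ S, ∀ v, (orbit G v).indicator x ∈ S) :
    finrank K S = {C : Set V | ∃ v, C = orbit G v ∧ ∃ x ∈ S, x v ≠ 0}.ncard := by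
  classical
  set O := {C : Set V | ∃ v, C = orbit G v ∧ ∃ x ∈ S, x v ≠ 0}
  have : Fintype O := Fintype.ofFinite O
  choose v hvO x hxS hxv using fun C : O => C.2
  set e : O → V → K := fun C => (x C (v C))⁻¹ • (C : Set V).indicator (x C)
  have he_mem : ∀ C, e C ∈ S := fun C => S.smul_mem _ (hvO C ▸ hres _ (hxS C) _)
  have he_apply : ∀ C D, e C (v D) = if C = D then 1 else 0 := by
    intro C D
    by_cases hCD : C = D
    · subst hCD
      simp [e, hvO C, mem_orbit_self, hxv C]
    · have : v D ∉ (C : Set V) := by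
        rw [hvO C]
        intro hD
        exact hCD (Subtype.ext (by rw [hvO C, hvO D, orbit_eq_iff.2 hD]))
      simp [e, this, hCD]
  let Φ : S →ₗ[K] O → K := (LinearMap.pi fun D => LinearMap.proj (v D)) ∘ₗ S.subtype
  have hinj : Injective Φ := by
    rw [← LinearMap.ker_eq_bot, Submodule.eq_bot_iff]
    intro y hy
    by_contra hy0
    obtain ⟨u, hu⟩ : ∃ u, (y : V → K) u ≠ 0 := by
      by_contra! H
      exact hy0 (Subtype.ext (funext H))
    set D : O := ⟨orbit G u, u, rfl, y, y.2, hu⟩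
    obtain ⟨g, hg⟩ : v D ∈ orbit G u := orbit_eq_iff.1 (hvO D).symm
    exact hsupp y y.2 g u hu (by simpa [Φ, ← hg] using congrFun (LinearMap.mem_ker.1 hy) D)
  have hsurj : Surjective Φ := by
    intro f
    refine ⟨⟨∑ C, f C • e C, S.sum_mem fun C _ => S.smul_mem _ (he_mem C)⟩, funext fun D => ?_⟩
    simp [Φ, he_apply]
  rw [(LinearEquiv.ofBijective Φ ⟨hinj, hsurj⟩).finrank_eq, finrank_fintype_fun_eq_card,
    ← Nat.card_eq_fintype_card, Nat.card_coe_set_eq]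

lemma prod_zpow_eq_zpow_sum {ι K : Type*} [CommGroupWithZero K] {ζ : K} (hζ : ζ ≠ 0)
    (s : Finset ι) (e : ι → ℤ) : ∏ i ∈ s, ζ ^ e i = ζ ^ ∑ i ∈ s, e i := by
  induction s using Finset.cons_induction with
  | empty => simp
  | cons i s hi ih => rw [Finset.prod_cons, Finset.sum_cons, ih, zpow_add₀ hζ]

open Fin.NatCast in
lemma exists_cyclic_solution {K : Type*} [Field K] {ζ : K} (hζ : ζ ≠ 0) {n : ℕ}
    (e : Fin (n + 1) → ℤ) (h1 : ζ ^ ∑ t, e t = 1) :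
    ∃ y : Fin (n + 1) → K, y 0 = 1 ∧ ∀ t, y t = ζ ^ e t * y (t + 1) := by
  refine ⟨fun t => ζ ^ (-∑ j ∈ Finset.range t, e j), by simp, fun t => ?_⟩
  dsimp only
  rw [← zpow_add₀ hζ, Fin.val_add_one]
  split_ifs with ht
  · have hsum : ∑ t, e t = ∑ j ∈ Finset.range n, e j + e (Fin.last n) := by
      rw [Fin.sum_univ_castSucc, ← Fin.sum_univ_eq_sum_range]
      simp [Fin.coe_eq_castSucc]
    rw [ht, Fin.val_last, Finset.sum_range_zero, neg_zero, add_zero, ← mul_one (ζ ^ (-_)), ← h1,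
      hsum, ← zpow_add₀ hζ]
    ring_nf
  · rw [Finset.sum_range_succ, Fin.cast_val_eq_self]
    ring_nf

lemma pow_smul_inj_of_lt_period {G α : Type*} [Monoid G] [MulAction G α] {g : G} {a : α}
    {i j : ℕ} (hi : i < period g a) (hj : j < period g a) (h : g ^ i • a = g ^ j • a) : i = j := by
  rw [period_eq_minimalPeriod] at hi hj
  rw [← smul_iterate_apply, ← smul_iterate_apply] at h
  exact (iterate_eq_iterate_iff_of_lt_minimalPeriod hi hj).1 h

structure WeightedMatching (V : Type*) where
  partner : Equiv.Perm V
  weight : V → ℤ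
  partner_partner : ∀ v, partner (partner v) = v
  partner_ne : ∀ v, partner v ≠ v
  weight_partner : ∀ v, weight (partner v) = -weight v

namespace WeightedMatching

variable {V K : Type*} [Field K]

section Solutions

variable (M : WeightedMatching V) (ζ : K)

def SatisfiesAt (x : V → K) (v : V) : Prop := x v = ζ ^ M.weight v * x (M.partner v)

def solutions : Submodule K (V → K) where
  carrier := {x | ∀ v, M.SatisfiesAt ζ x v}
  add_mem' {x y} hx hy v := by
    change x v + y v = _
    rw [hx v, hy v, Pi.add_apply, mul_add]
  zero_mem' _ := by simp [SatisfiesAt]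
  smul_mem' c x hx v := by
    change c * x v = _
    rw [hx v, Pi.smul_apply, smul_eq_mul, mul_left_comm]

@[simp]
lemma mem_solutions {x : V → K} : x ∈ M.solutions ζ ↔ ∀ v, M.SatisfiesAt ζ x v := Iff.rfl

variable {M ζ}

lemma satisfiesAt_partner_iff (hζ : ζ ≠ 0) {x : V → K} {v : V} :
    M.SatisfiesAt ζ x (M.partner v) ↔ M.SatisfiesAt ζ x v := by
  rw [SatisfiesAt, SatisfiesAt, M.partner_partner, M.weight_partner, _root_.zpow_neg,
    eq_inv_mul_iff_mul_eq₀ (zpow_ne_zero _ hζ), eq_comm]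

lemma SatisfiesAt.ne_zero {x : V → K} {v : V} (hx : M.SatisfiesAt ζ x v) (hv : x v ≠ 0) :
    x (M.partner v) ≠ 0 := by
  intro h
  rw [SatisfiesAt, h, mul_zero] at hx
  exact hv hx

lemma indicator_mem_solutions {x : V → K} (hx : x ∈ M.solutions ζ) {A : Set V}
    (hA : ∀ v, M.partner v ∈ A ↔ v ∈ A) : A.indicator x ∈ M.solutions ζ := by
  classical
  intro v
  by_cases hv : v ∈ A
  · simpa [SatisfiesAt, hv, hA] using hx v
  · simp [SatisfiesAt, hv, hA]

end Solutions

variable {M N : WeightedMatching V} {ζ : K}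

variable (M N) in
def partnerGroup : Subgroup (Equiv.Perm V) := Subgroup.closure {M.partner, N.partner}

lemma left_mem_partnerGroup : M.partner ∈ M.partnerGroup N :=
  Subgroup.subset_closure (by simp)

lemma right_mem_partnerGroup : N.partner ∈ M.partnerGroup N :=
  Subgroup.subset_closure (by simp)

lemma orbit_partnerGroup_subset {A : Set V} (hM : ∀ u ∈ A, M.partner u ∈ A)
    (hN : ∀ u ∈ A, N.partner u ∈ A) {v : V} (hv : v ∈ A) : orbit (M.partnerGroup N) v ⊆ A := by
  have hstab : ∀ g ∈ M.partnerGroup N, ∀ u, g u ∈ A ↔ u ∈ A := by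
    intro g hg
    induction hg using Subgroup.closure_induction with
    | mem g hg =>
      have hP : ∀ P : WeightedMatching V, (∀ u ∈ A, P.partner u ∈ A) →
          ∀ u, P.partner u ∈ A ↔ u ∈ A :=
        fun P hP u => ⟨fun h => P.partner_partner u ▸ hP _ h, hP u⟩
      rcases hg with rfl | rfl
      exacts [hP M hM, hP N hN]
    | one => simp
    | mul g g' _ _ ihg ihg' => simp [ihg, ihg']
    | inv g _ ihg => intro u; simpa using (ihg (g⁻¹ u)).symm
  rintro _ ⟨g, rfl⟩
  exact (hstab g g.2 v).2 hv

lemma partner_mem_orbit_iff {P : WeightedMatching V} (hP : P.partner ∈ M.partnerGroup N)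
    {u v : V} : P.partner u ∈ orbit (M.partnerGroup N) v ↔ u ∈ orbit (M.partnerGroup N) v := by
  change (⟨P.partner, hP⟩ : M.partnerGroup N) • u ∈ _ ↔ _
  rw [← orbit_eq_iff, orbit_smul, orbit_eq_iff]

lemma orbit_subset_support {x : V → K} (hx : x ∈ M.solutions ζ ⊓ N.solutions ζ) {v : V}
    (hv : x v ≠ 0) : orbit (M.partnerGroup N) v ⊆ {u | x u ≠ 0} :=
  orbit_partnerGroup_subset (fun u hu => (hx.1 u).ne_zero hu) (fun u hu => (hx.2 u).ne_zero hu) hv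

variable (M N) in
def alternate {n : ℕ} (t : Fin n) : WeightedMatching V := if t.1 % 2 = 0 then M else N

lemma alternate_add_one {s : ℕ} (t : Fin (2 * s + 2)) :
    M.alternate N (t + 1) = N.alternate M t := by
  have hpar : (t + 1).val % 2 = 0 ↔ t.val % 2 ≠ 0 := by
    rw [Fin.val_add_one]
    split_ifs with h
    · simp [h]
    · omega
  by_cases h : t.val % 2 = 0 <;> simp [alternate, hpar, h]

lemma alternate_sub_one {s : ℕ} (t : Fin (2 * s + 2)) :
    M.alternate N (t - 1) = N.alternate M t := by
  rw [← alternate_add_one, sub_add_cancel]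

lemma alternate_eq_or {P : WeightedMatching V} (hP : P = M ∨ P = N) {n : ℕ} (t : Fin n) :
    M.alternate N t = P ∨ N.alternate M t = P := by
  unfold alternate
  rcases hP with rfl | rfl <;> split_ifs <;> simp

lemma alternate_partner_mem {n : ℕ} (t : Fin n) :
    (M.alternate N t).partner ∈ M.partnerGroup N := by
  unfold alternate
  split_ifs
  exacts [left_mem_partnerGroup, right_mem_partnerGroup]

lemma inf_solutions_le_alternate {n : ℕ} (t : Fin n) :
    M.solutions ζ ⊓ N.solutions ζ ≤ (M.alternate N t).solutions ζ := by
  unfold alternate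
  split_ifs
  exacts [inf_le_left, inf_le_right]

variable (M N) in
def IsAlternatingCycle {s : ℕ} (c : Fin (2 * s + 2) → V) : Prop :=
  Injective c ∧ ∀ t, c (t + 1) = (M.alternate N t).partner (c t)

variable (M N) in
def conductor {s : ℕ} (c : Fin (2 * s + 2) → V) : ℤ := ∑ t, (M.alternate N t).weight (c t)

namespace IsAlternatingCycle

variable {s : ℕ} {c : Fin (2 * s + 2) → V}

lemma alternate_symm_partner_apply (hc : IsAlternatingCycle M N c) (t : Fin (2 * s + 2)) :
    (N.alternate M t).partner (c t) = c (t - 1) := by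
  rw [← sub_add_cancel t 1, hc.2, sub_add_cancel, ← alternate_sub_one, partner_partner]

lemma partner_mem_range (hc : IsAlternatingCycle M N c) {P : WeightedMatching V}
    (hP : P = M ∨ P = N) (t : Fin (2 * s + 2)) : P.partner (c t) ∈ Set.range c := by
  rcases alternate_eq_or hP t with h | h
  · exact ⟨t + 1, by rw [hc.2, h]⟩
  · exact ⟨t - 1, by rw [← hc.alternate_symm_partner_apply, h]⟩

lemma range_eq_orbit (hc : IsAlternatingCycle M N c) :
    Set.range c = orbit (M.partnerGroup N) (c 0) := by
  refine subset_antisymm ?_ (orbit_partnerGroup_subset ?_ ?_ (Set.mem_range_self 0))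
  · rintro _ ⟨t, rfl⟩
    induction t using Fin.induction with
    | zero => exact mem_orbit_self _
    | succ t ih =>
      rwa [← Fin.coeSucc_eq_succ, hc.2, partner_mem_orbit_iff (alternate_partner_mem _)]
  all_goals rintro _ ⟨t, rfl⟩
  exacts [hc.partner_mem_range (.inl rfl) t, hc.partner_mem_range (.inr rfl) t]

lemma satisfiesAt (hc : IsAlternatingCycle M N c) (hζ : ζ ≠ 0) {x : V → K}
    (hx : ∀ t, (M.alternate N t).SatisfiesAt ζ x (c t)) {P : WeightedMatching V}
    (hP : P = M ∨ P = N) (t : Fin (2 * s + 2)) : P.SatisfiesAt ζ x (c t) := by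
  rcases alternate_eq_or hP t with h | h
  · exact h ▸ hx t
  · have hprev : M.alternate N (t - 1) = P := by rw [alternate_sub_one, h]
    have hct : c t = P.partner (c (t - 1)) := by rw [← hprev, ← hc.2, sub_add_cancel]
    rw [hct, satisfiesAt_partner_iff hζ, ← hprev]
    exact hx (t - 1)

lemma mem_inf_solutions (hc : IsAlternatingCycle M N c) (hζ : ζ ≠ 0) {x : V → K}
    (hx : ∀ t, (M.alternate N t).SatisfiesAt ζ x (c t)) (hout : ∀ v ∉ Set.range c, x v = 0) :
    x ∈ M.solutions ζ ⊓ N.solutions ζ := by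
  have hmem : ∀ P : WeightedMatching V, P = M ∨ P = N → x ∈ P.solutions ζ := by
    intro P hP v
    by_cases hv : v ∈ Set.range c
    · obtain ⟨t, rfl⟩ := hv
      exact hc.satisfiesAt hζ hx hP t
    · have hpv : P.partner v ∉ Set.range c := by
        rintro ⟨t, ht⟩
        exact hv (P.partner_partner v ▸ ht ▸ hc.partner_mem_range hP t)
      rw [SatisfiesAt, hout v hv, hout _ hpv, mul_zero]
  exact ⟨hmem M (.inl rfl), hmem N (.inr rfl)⟩

lemma zpow_conductor_eq_one (hc : IsAlternatingCycle M N c) (hζ : ζ ≠ 0) {x : V → K}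
    (hx : x ∈ M.solutions ζ ⊓ N.solutions ζ) (hx0 : x (c 0) ≠ 0) :
    ζ ^ conductor M N c = 1 := by
  have hne : ∀ t, x (c t) ≠ 0 := fun t =>
    orbit_subset_support hx hx0 (hc.range_eq_orbit ▸ Set.mem_range_self t)
  have hstep : ∀ t, x (c t) = ζ ^ (M.alternate N t).weight (c t) * x (c (t + 1)) := fun t => by
    rw [hc.2]
    exact inf_solutions_le_alternate t hx (c t)
  have hshift : ∏ t, x (c (t + 1)) = ∏ t, x (c t) :=
    Equiv.prod_comp (Equiv.addRight (1 : Fin (2 * s + 2))) fun t => x (c t)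
  have hprod : ∏ t, x (c t) = ζ ^ conductor M N c * ∏ t, x (c t) := by
    conv_lhs => rw [Finset.prod_congr rfl fun t _ => hstep t]
    rw [Finset.prod_mul_distrib, hshift, conductor, prod_zpow_eq_zpow_sum hζ]
  exact (mul_eq_right₀ (Finset.prod_ne_zero_iff.2 fun t _ => hne t)).1 hprod.symm

lemma exists_mem_inf_solutions (hc : IsAlternatingCycle M N c) (hζ : ζ ≠ 0)
    (h1 : ζ ^ conductor M N c = 1) : ∃ x ∈ M.solutions ζ ⊓ N.solutions ζ, x (c 0) ≠ 0 := by
  obtain ⟨y, hy0, hy⟩ := exists_cyclic_solution hζ _ h1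
  refine ⟨extend c y 0, hc.mem_inf_solutions hζ (fun t => ?_) (fun v hv => ?_), ?_⟩
  · rw [SatisfiesAt, ← hc.2, hc.1.extend_apply, hc.1.extend_apply]
    exact hy t
  · exact extend_apply' _ _ _ (by simpa using hv)
  · simp [hc.1.extend_apply, hy0]

end IsAlternatingCycle

section Rotation

variable (M N)

def rotation : Equiv.Perm V := N.partner * M.partner

lemma partner_inv : M.partner⁻¹ = M.partner :=
  inv_eq_of_mul_eq_one_right (Equiv.ext M.partner_partner)

lemma rotation_mul_partner : M.rotation N * M.partner = N.partner := by
  ext u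
  simp [rotation, partner_partner]

lemma rotation_pow_succ_apply (k : ℕ) (v : V) :
    (M.rotation N ^ (k + 1)) v = N.partner (M.partner ((M.rotation N ^ k) v)) := by
  rw [pow_succ', Equiv.Perm.mul_apply]
  rfl

lemma partner_mul_rotation_zpow (k : ℤ) :
    M.partner * M.rotation N ^ k = M.rotation N ^ (-k) * M.partner := by
  have hconj : M.partner * M.rotation N * M.partner⁻¹ = (M.rotation N)⁻¹ := by
    ext u
    simp [rotation, partner_inv, partner_partner]
  rw [_root_.zpow_neg, ← _root_.inv_zpow, ← hconj, conj_zpow, inv_mul_cancel_right]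

lemma rotation_zpow_mul_partner_apply_ne (k : ℤ) (u : V) :
    (M.rotation N ^ k * M.partner) u ≠ u := by
  -- each reflection `rotation ^ k * M.partner` is conjugate to `M.partner` or to `N.partner`
  obtain ⟨j, rfl | rfl⟩ := Int.even_or_odd' k
  · have hconj : M.rotation N ^ (2 * j) * M.partner =
        M.rotation N ^ j * M.partner * (M.rotation N ^ j)⁻¹ := by
      rw [mul_assoc, ← _root_.zpow_neg, partner_mul_rotation_zpow]
      group
    rw [hconj, Equiv.Perm.mul_apply, Equiv.Perm.mul_apply]
    intro h
    exact M.partner_ne _ (Equiv.Perm.inv_eq_iff_eq.2 h.symm).symm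
  · have hconj : M.rotation N ^ (2 * j + 1) * M.partner =
        M.rotation N ^ j * N.partner * (M.rotation N ^ j)⁻¹ := by
      rw [← M.rotation_mul_partner N, mul_assoc, mul_assoc, ← _root_.zpow_neg,
        partner_mul_rotation_zpow]
      group
    rw [hconj, Equiv.Perm.mul_apply, Equiv.Perm.mul_apply]
    intro h
    exact N.partner_ne _ (Equiv.Perm.inv_eq_iff_eq.2 h.symm).symm

lemma rotation_pow_apply_ne_partner (i j : ℕ) (v : V) :
    (M.rotation N ^ i) v ≠ M.partner ((M.rotation N ^ j) v) := by
  intro h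
  apply M.rotation_zpow_mul_partner_apply_ne N ((j : ℤ) - i) ((M.rotation N ^ j) v)
  rw [Equiv.Perm.mul_apply, ← h, ← Equiv.Perm.mul_apply, ← zpow_natCast, ← _root_.zpow_add,
    sub_add_cancel, zpow_natCast]

def rotationWalk (v : V) {s : ℕ} (t : Fin (2 * s + 2)) : V :=
  if t.val % 2 = 0 then (M.rotation N ^ (t.val / 2)) v
  else M.partner ((M.rotation N ^ (t.val / 2)) v)

variable {M N} {v : V} {s : ℕ}

lemma rotationWalk_injective (hs : period (M.rotation N) v = s + 1) :
    Injective (M.rotationWalk N v (s := s)) := by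
  intro t t' h
  have hlt : ∀ t : Fin (2 * s + 2), t.val / 2 < period (M.rotation N) v := fun t => by omega
  simp only [rotationWalk] at h
  split_ifs at h
  · have := pow_smul_inj_of_lt_period (hlt t) (hlt t') h
    ext
    omega
  · exact absurd h (M.rotation_pow_apply_ne_partner N _ _ v)
  · exact absurd h.symm (M.rotation_pow_apply_ne_partner N _ _ v)
  · have := pow_smul_inj_of_lt_period (hlt t) (hlt t') (M.partner.injective h)
    ext
    omega

lemma rotationWalk_add_one (hs : period (M.rotation N) v = s + 1) (t : Fin (2 * s + 2)) :
    M.rotationWalk N v (t + 1) = (M.alternate N t).partner (M.rotationWalk N v t) := by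
  rcases eq_or_ne t (Fin.last _) with rfl | ht
  · have hodd : ¬ (2 * s + 1) % 2 = 0 := by omega
    have hlast : (2 * s + 1) / 2 = s := by omega
    simp only [rotationWalk, alternate, Fin.last_add_one, Fin.val_zero, Fin.val_last, hodd, hlast,
      Nat.zero_mod, Nat.zero_div, if_true, if_false, pow_zero, Equiv.Perm.one_apply,
      ← rotation_pow_succ_apply, ← hs]
    exact (pow_period_smul (M.rotation N) v).symm
  · simp only [rotationWalk, alternate, Fin.val_add_one_of_lt (lt_of_le_of_ne (Fin.le_last t) ht)]
    split_ifs
    · omega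
    · rw [← rotation_pow_succ_apply]
      congr 2
      omega
    · rw [show (t.val + 1) / 2 = t.val / 2 by omega]
    · omega

end Rotation

lemma exists_isAlternatingCycle [Finite V] (v : V) :
    ∃ (s : ℕ) (c : Fin (2 * s + 2) → V), IsAlternatingCycle M N c ∧ c 0 = v := by
  obtain ⟨s, hs⟩ : ∃ s, period (M.rotation N) v = s + 1 :=
    Nat.exists_eq_add_one.2 (period_pos_of_orderOf_pos (orderOf_pos _) v)
  exact ⟨s, M.rotationWalk N v, ⟨rotationWalk_injective hs, rotationWalk_add_one hs⟩,
    by simp [rotationWalk]⟩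

theorem finrank_inf_solutions [Finite V] (hζ : ζ ≠ 0) :
    finrank K ↥(M.solutions ζ ⊓ N.solutions ζ) =
      {C : Set V | ∃ (s : ℕ) (c : Fin (2 * s + 2) → V),
        IsAlternatingCycle M N c ∧ Set.range c = C ∧ ζ ^ conductor M N c = 1}.ncard := by
  rw [finrank_eq_ncard_supporting_orbits (G := M.partnerGroup N)]
  · congr 1
    ext C
    constructor
    · rintro ⟨v, rfl, x, hx, hxv⟩
      obtain ⟨s, c, hc, rfl⟩ := exists_isAlternatingCycle (M := M) (N := N) v
      exact ⟨s, c, hc, hc.range_eq_orbit, hc.zpow_conductor_eq_one hζ hx hxv⟩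
    · rintro ⟨s, c, hc, rfl, h1⟩
      obtain ⟨x, hx, hx0⟩ := hc.exists_mem_inf_solutions hζ h1
      exact ⟨c 0, hc.range_eq_orbit, x, hx, hx0⟩
  · intro x hx g v hv
    exact orbit_subset_support hx hv (mem_orbit v g)
  · intro x hx v
    exact ⟨indicator_mem_solutions hx.1 fun u => partner_mem_orbit_iff left_mem_partnerGroup,
      indicator_mem_solutions hx.2 fun u => partner_mem_orbit_iff right_mem_partnerGroup⟩

end WeightedMatching

lemma zeta2d_ne_zero (d : ℕ) : zeta2d d ≠ 0 := Complex.exp_ne_zero _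

section LinearCycle

variable {h : ℕ}

lemma exists_eq_evIdx_or_odIdx (p : Fin (2 * h + 2)) : ∃ k, p = evIdx h k ∨ p = odIdx h k := by
  refine ⟨⟨p / 2, by omega⟩, ?_⟩
  simp only [evIdx, odIdx, Fin.ext_iff]
  omega

lemma evIdx_injective : Injective (evIdx h) := fun k k' hk => by
  simp only [evIdx, Fin.ext_iff] at hk
  ext
  omega

lemma odIdx_injective : Injective (odIdx h) := fun k k' hk => by
  simp only [odIdx, Fin.ext_iff] at hk
  ext
  omega

lemma evIdx_ne_odIdx (k k' : Fin (h + 1)) : evIdx h k ≠ odIdx h k' := by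
  simp only [evIdx, odIdx, ne_eq, Fin.ext_iff]
  omega

variable (h) in
def pairSwap (p : Fin (2 * h + 2)) : Fin (2 * h + 2) :=
  ⟨if p.val % 2 = 0 then p.val + 1 else p.val - 1, by split <;> omega⟩

lemma val_pairSwap (p : Fin (2 * h + 2)) :
    (pairSwap h p).val = if p.val % 2 = 0 then p.val + 1 else p.val - 1 :=
  rfl

@[simp]
lemma pairSwap_evIdx (k : Fin (h + 1)) : pairSwap h (evIdx h k) = odIdx h k := by
  ext
  rw [val_pairSwap, if_pos (by simp [evIdx])]
  rfl

@[simp]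
lemma pairSwap_odIdx (k : Fin (h + 1)) : pairSwap h (odIdx h k) = evIdx h k := by
  ext
  rw [val_pairSwap, if_neg (by simp [odIdx])]
  rfl

variable (h) in
lemma pairSwap_involutive : Involutive (pairSwap h) := fun p => by
  obtain ⟨k, rfl | rfl⟩ := exists_eq_evIdx_or_odIdx p <;> simp

lemma pairSwap_ne (p : Fin (2 * h + 2)) : pairSwap h p ≠ p := by
  obtain ⟨k, rfl | rfl⟩ := exists_eq_evIdx_or_odIdx p
  exacts [(pairSwap_evIdx k).trans_ne (evIdx_ne_odIdx k k).symm,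
    (pairSwap_odIdx k).trans_ne (evIdx_ne_odIdx k k)]

variable (h) in
def pairWeight (a : Fin (h + 1) → ℕ) (p : Fin (2 * h + 2)) : ℤ :=
  (if p.val % 2 = 0 then 1 else -1) * (1 + 2 * a ⟨p.val / 2, by omega⟩)

@[simp]
lemma pairWeight_evIdx (a : Fin (h + 1) → ℕ) (k : Fin (h + 1)) :
    pairWeight h a (evIdx h k) = 1 + 2 * a k := by
  simp [pairWeight, evIdx]

@[simp]
lemma pairWeight_odIdx (a : Fin (h + 1) → ℕ) (k : Fin (h + 1)) :
    pairWeight h a (odIdx h k) = -(1 + 2 * a k) := by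
  simp [pairWeight, odIdx, show (2 * k.val + 1) / 2 = k.val by omega]

lemma pairWeight_pairSwap (a : Fin (h + 1) → ℕ) (p : Fin (2 * h + 2)) :
    pairWeight h a (pairSwap h p) = -pairWeight h a p := by
  obtain ⟨k, rfl | rfl⟩ := exists_eq_evIdx_or_odIdx p <;> simp

variable (h) in
def linearCycleMatching (a : Fin (h + 1) → ℕ) (b : Equiv.Perm (Fin (2 * h + 2))) :
    WeightedMatching (Fin (2 * h + 2)) where
  partner := b.symm.trans ((pairSwap_involutive h).toPerm.trans b)
  weight v := pairWeight h a (b.symm v)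
  partner_partner v := by
    simp only [Equiv.trans_apply, Equiv.symm_apply_apply, Involutive.coe_toPerm,
      pairSwap_involutive h _, Equiv.apply_symm_apply]
  partner_ne v hv := pairSwap_ne (b.symm v) (by simpa using congrArg b.symm hv)
  weight_partner v := by simp [pairWeight_pairSwap]

variable (a : Fin (h + 1) → ℕ) (b : Equiv.Perm (Fin (2 * h + 2)))

@[simp]
lemma linearCycleMatching_partner_evIdx (k : Fin (h + 1)) :
    (linearCycleMatching h a b).partner (b (evIdx h k)) = b (odIdx h k) := by
  simp [linearCycleMatching]

@[simp]
lemma linearCycleMatching_partner_odIdx (k : Fin (h + 1)) :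
    (linearCycleMatching h a b).partner (b (odIdx h k)) = b (evIdx h k) := by
  simp [linearCycleMatching]

@[simp]
lemma linearCycleMatching_weight_evIdx (k : Fin (h + 1)) :
    (linearCycleMatching h a b).weight (b (evIdx h k)) = 1 + 2 * a k := by
  simp [linearCycleMatching]

@[simp]
lemma linearCycleMatching_weight_odIdx (k : Fin (h + 1)) :
    (linearCycleMatching h a b).weight (b (odIdx h k)) = -(1 + 2 * a k) := by
  simp [linearCycleMatching]

lemma exists_pair_eq_iff_eq_partner {u v : Fin (2 * h + 2)} :
    (∃ k, ({u, v} : Set (Fin (2 * h + 2))) = {b (evIdx h k), b (odIdx h k)}) ↔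
      v = (linearCycleMatching h a b).partner u := by
  constructor
  · rintro ⟨k, hk⟩
    rcases Set.pair_eq_pair_iff.1 hk with ⟨rfl, rfl⟩ | ⟨rfl, rfl⟩ <;> simp
  · rintro rfl
    obtain ⟨p, rfl⟩ := b.surjective u
    obtain ⟨k, rfl | rfl⟩ := exists_eq_evIdx_or_odIdx p
    exacts [⟨k, by simp⟩, ⟨k, by simp [Set.pair_comm]⟩]

lemma stepSign_partner (u : Fin (2 * h + 2)) :
    stepSign h a b u ((linearCycleMatching h a b).partner u) =
      (linearCycleMatching h a b).weight u := by
  obtain ⟨p, rfl⟩ := b.surjective u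
  obtain ⟨k, rfl | rfl⟩ := exists_eq_evIdx_or_odIdx p
  all_goals simp [stepSign, evIdx_injective.eq_iff, odIdx_injective.eq_iff, evIdx_ne_odIdx,
    (evIdx_ne_odIdx _ _).symm]

lemma Lsub_eq_solutions (d : ℕ) :
    Lsub h d a b = (linearCycleMatching h a b).solutions (zeta2d d) := by
  have hev : ∀ k x, (linearCycleMatching h a b).SatisfiesAt (zeta2d d) x (b (evIdx h k)) ↔
      x (b (evIdx h k)) - zeta2d d ^ (1 + 2 * a k) * x (b (odIdx h k)) = 0 := by
    intro k x
    rw [WeightedMatching.SatisfiesAt, linearCycleMatching_weight_evIdx,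
      linearCycleMatching_partner_evIdx, sub_eq_zero]
    norm_cast
  ext x
  simp only [Lsub, Submodule.mem_iInf, LinearMap.mem_ker, LinearMap.sub_apply,
    LinearMap.smul_apply, LinearMap.proj_apply, smul_eq_mul, ← hev, WeightedMatching.mem_solutions]
  refine ⟨fun H v => ?_, fun H k => H _⟩
  obtain ⟨p, rfl⟩ := b.surjective v
  obtain ⟨k, rfl | rfl⟩ := exists_eq_evIdx_or_odIdx p
  · exact H k
  · rw [← linearCycleMatching_partner_evIdx a b k,
      WeightedMatching.satisfiesAt_partner_iff (zeta2d_ne_zero d)]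
    exact H k

end LinearCycle

lemma cyc_eq_add_one (s : ℕ) (t : Fin (2 * s + 2)) : cyc s t = t + 1 :=
  Fin.ext (by rw [Fin.val_add, Fin.val_one]; rfl)

lemma zeta2d_isPrimitiveRoot {d : ℕ} (hd : d ≠ 0) : IsPrimitiveRoot (zeta2d d) (2 * d) := by
  simpa [zeta2d] using Complex.isPrimitiveRoot_exp (2 * d) (by omega)

section Bicycle

variable {h s : ℕ} (a ac : Fin (h + 1) → ℕ) {b bc : Equiv.Perm (Fin (2 * h + 2))}
  {c : Fin (2 * s + 2) → Fin (2 * h + 2)}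

lemma isBicycle_iff : IsBicycle h b bc c ↔
    (linearCycleMatching h a b).IsAlternatingCycle (linearCycleMatching h ac bc) c := by
  refine and_congr_right' (forall_congr' fun t => ?_)
  rw [cyc_eq_add_one, WeightedMatching.alternate]
  split_ifs
  exacts [exists_pair_eq_iff_eq_partner a b, exists_pair_eq_iff_eq_partner ac bc]

variable {a ac}

lemma bicConductor_eq_conductor
    (hc : (linearCycleMatching h a b).IsAlternatingCycle (linearCycleMatching h ac bc) c) :
    bicConductor h a ac b bc c =
      (linearCycleMatching h a b).conductor (linearCycleMatching h ac bc) c := by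
  refine Finset.sum_congr rfl fun t _ => ?_
  rw [cyc_eq_add_one, hc.2, WeightedMatching.alternate]
  split_ifs
  exacts [stepSign_partner a b _, stepSign_partner ac bc _]

end Bicycle

theorem finrank_inter_eq_card_new_bicycles_general (h d : ℕ)
    (a ac : Fin (h + 1) → Fin d) (b bc : Equiv.Perm (Fin (2 * h + 2))) :
    Module.finrank ℂ
        ↥(Lsub h d (fun e => (a e : ℕ)) b ⊓ Lsub h d (fun e => (ac e : ℕ)) bc)
      = Set.ncard {S : Set (Fin (2 * h + 2)) |
          ∃ (s : ℕ) (c : Fin (2 * s + 2) → Fin (2 * h + 2)),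
            IsBicycle h b bc c ∧ Set.range c = S ∧
            ((2 * d : ℤ) ∣ bicConductor h (fun e => (a e : ℕ)) (fun e => (ac e : ℕ)) b bc c)} := by
  have hζ := zeta2d_isPrimitiveRoot (Fin.pos (a 0)).ne'
  rw [Lsub_eq_solutions, Lsub_eq_solutions,
    WeightedMatching.finrank_inf_solutions (zeta2d_ne_zero d)]
  congr 1
  ext S
  refine exists₂_congr fun s c => ?_
  rw [isBicycle_iff (fun e => (a e : ℕ)) (fun e => (ac e : ℕ))]
  refine and_congr_right fun hc => and_congr_right' ?_
  rw [bicConductor_eq_conductor hc, hζ.zpow_eq_one_iff_dvd]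
  push_cast
  rfl

/-- The dimension of `L_{a,b} ∩ L_{ǎ,b̌}` equals the number of new bicycles attached to
`((a,b),(ǎ,b̌))`, i.e. the number of supports of bicycles whose bicConductor is divisible
by `2d`. -/
theorem finrank_inter_eq_card_new_bicycles (h d : ℕ) (hh : 1 ≤ h) (hd : 3 ≤ d)
    (a ac : Fin (h + 1) → Fin d) (b bc : Equiv.Perm (Fin (2 * h + 2))) :
    Module.finrank ℂ
        ↥(Lsub h d (fun e => (a e : ℕ)) b ⊓ Lsub h d (fun e => (ac e : ℕ)) bc)
      = Set.ncard {S : Set (Fin (2 * h + 2)) |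
          ∃ (s : ℕ) (c : Fin (2 * s + 2) → Fin (2 * h + 2)),
            IsBicycle h b bc c ∧ Set.range c = S ∧
            ((2 * d : ℤ) ∣ bicConductor h (fun e => (a e : ℕ)) (fun e => (ac e : ℕ)) b bc c)} :=
  finrank_inter_eq_card_new_bicycles_general h d a ac b bc
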